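/- Let n, k be integers with 1 ≤ k and 2k ≤ n, and let a ∈ ℤ. In the field of fractions of R_n set F := (x_1 x_2 ⋯ x_{2k})^{a} · (∏_{1 ≤ i < j ≤ n, j > 2k} (1 − x_i x_j)) / (∏_{1 ≤ i < j ≤ n} (1 − x_i^{−1} x_j)). Let φ_k : R_n → ℤ[x_1^{±1}, …, x_k^{±1}, x_{2k+1}^{±1}, …, x_n^{±1}] be the ring homomorphism determined by x_i ↦ x_i for 1 ≤ i ≤ k, x_{k+i} ↦ x_i^{−1} for 1 ≤ i ≤ k, and x_j ↦ x_j for 2k < j ≤ n. For every w ∈ S_n, the image under φ_k of the denominator of w(F), namely φ_k(∏_{1 ≤ i < j ≤ n} (1 − x_{w(i)}^{−1} x_{w(j)})), is nonzero, so φ_k extends to each element w(F); and the resulting sum satisfies ∑_{w ∈ S_n} φ_k(w(F)) = ∏_{2k < i < j ≤ n} (1 − x_i x_j), an identity in the field of fractions of ℤ[x_1^{±1}, …, x_k^{±1}, x_{2k+1}^{±1}, …, x_n^{±1}]. -/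

import Mathlib

/-!
Common setup: `R n` is the ring of Laurent polynomials
`ℤ[x₁^{±1}, …, xₙ^{±1}]`, realized as the group algebra over `ℤ` of the
group `ℤ^n` of exponent vectors (`AddMonoidAlgebra ℤ (Fin n → ℤ)`).
-/

noncomputable section

/-- The ring `Rₙ = ℤ[x₁^{±1}, …, xₙ^{±1}]` of Laurent polynomials in `n` variables. -/
abbrev R (n : ℕ) : Type := AddMonoidAlgebra ℤ (Fin n → ℤ)

/-- The variable `xᵢ` of `R n` (`i` is a `0`-based index). -/
def X {n : ℕ} (i : Fin n) : R n := AddMonoidAlgebra.single (Pi.single i (1 : ℤ)) 1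

/-- The inverse `xᵢ⁻¹` of the variable `xᵢ` of `R n`. -/
def Xinv {n : ℕ} (i : Fin n) : R n := AddMonoidAlgebra.single (Pi.single i (-1 : ℤ)) 1

/-- The action of a permutation `w` on exponent vectors. -/
def permExp {n : ℕ} (w : Equiv.Perm (Fin n)) : (Fin n → ℤ) →+ (Fin n → ℤ) :=
  AddMonoidHom.mk' (fun m => m ∘ w.symm) (fun _ _ => rfl)

/-- The action of `w ∈ Sₙ` on `R n`, permuting the variables (`xᵢ ↦ x_{w i}`). -/
def permHom {n : ℕ} (w : Equiv.Perm (Fin n)) : R n →+* R n :=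
  AddMonoidAlgebra.mapDomainRingHom ℤ (permExp w)

/-- `f` is a symmetric Laurent polynomial, i.e. `f ∈ Rₙ^{Sₙ}`. -/
def SymmP {n : ℕ} (f : R n) : Prop := ∀ w : Equiv.Perm (Fin n), permHom w f = f

/-- The map of exponent groups underlying the evaluation
`xᵢ ↦ xᵢ (1 ≤ i ≤ n-2), x_{n-1} ↦ t, xₙ ↦ t⁻¹`; the second coordinate of the
target records the exponent of `t`. -/
def evExp (n : ℕ) : (Fin n → ℤ) →+ ((Fin (n - 2) → ℤ) × ℤ) :=
  AddMonoidHom.mk'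
    (fun m => (fun i => m (Fin.castLE (Nat.sub_le n 2) i),
      if h : 2 ≤ n then m ⟨n - 2, by omega⟩ - m ⟨n - 1, by omega⟩ else 0))
    (by
      intro a b
      refine Prod.ext (funext fun i => rfl) ?_
      by_cases h : 2 ≤ n
      · simp [h]; ring
      · simp [h])

/-- The evaluation homomorphism
`evₙ : ℤ[x₁^{±1},…,xₙ^{±1}] → ℤ[x₁^{±1},…,x_{n-2}^{±1}, t^{±1}]` determined by
`xᵢ ↦ xᵢ` for `1 ≤ i ≤ n-2`, `x_{n-1} ↦ t`, `xₙ ↦ t⁻¹`.  The target is realized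
as the group algebra of `ℤ^{n-2} × ℤ`, the last factor recording the exponent
of `t`. -/
def ev (n : ℕ) : R n →+* AddMonoidAlgebra ℤ ((Fin (n - 2) → ℤ) × ℤ) :=
  AddMonoidAlgebra.mapDomainRingHom ℤ (evExp n)

/-- An element of `ℤ[x₁^{±1},…,x_{n-2}^{±1}, t^{±1}]` "does not involve `t`",
i.e. it lies in the image of the subring `ℤ[x₁^{±1},…,x_{n-2}^{±1}]`. -/
def NoT (n : ℕ) (g : AddMonoidAlgebra ℤ ((Fin (n - 2) → ℤ) × ℤ)) : Prop :=
  g ∈ Set.range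
    (AddMonoidAlgebra.mapDomainRingHom ℤ (AddMonoidHom.inl (Fin (n - 2) → ℤ) ℤ))

/-- `J n`: for `n ≥ 2`, the set of symmetric Laurent polynomials `f` such that
`evₙ f` does not involve `t`; for `n = 0, 1` it is all of `Rₙ^{Sₙ}`. -/
def J (n : ℕ) : Set (R n) := {f | SymmP f ∧ (2 ≤ n → NoT n (ev n f))}

/-- Restriction of exponent vectors to the first `n - 2` coordinates. -/
def resExp (n : ℕ) : (Fin n → ℤ) →+ (Fin (n - 2) → ℤ) :=
  AddMonoidHom.mk' (fun m i => m (Fin.castLE (Nat.sub_le n 2) i)) (fun _ _ => rfl)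

/-- The ring homomorphism `R n → R (n-2)` which, on `J n`, is the
Duflo–Serganova map `dsₙ`: for `f ∈ J n` it is exactly `evₙ f` regarded as an
element of `ℤ[x₁^{±1},…,x_{n-2}^{±1}]` (the `t`-degree-`0` part of `evₙ f`). -/
def ds (n : ℕ) : R n →+* R (n - 2) :=
  AddMonoidAlgebra.mapDomainRingHom ℤ (resExp n)

/-- The product `∏_{1 ≤ i < j ≤ n} (1 - xᵢ xⱼ)`. -/
def P (n : ℕ) : R n :=
  ∏ p ∈ Finset.univ.filter (fun p : Fin n × Fin n => p.1 < p.2), (1 - X p.1 * X p.2)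

/-- The map of exponent groups underlying `φ_k : xᵢ ↦ xᵢ (1 ≤ i ≤ k)`,
`x_{k+i} ↦ xᵢ⁻¹ (1 ≤ i ≤ k)`, `xⱼ ↦ xⱼ (2k < j ≤ n)`.  The target is the
exponent group of `ℤ[x₁^{±1},…,x_k^{±1}, x_{2k+1}^{±1},…,xₙ^{±1}]`. -/
def phiExp (n k : ℕ) (h : 2 * k ≤ n) :
    (Fin n → ℤ) →+ ((Fin k → ℤ) × (Fin (n - 2 * k) → ℤ)) :=
  AddMonoidHom.mk'
    (fun m => (fun i => m ⟨i, by have := i.isLt; omega⟩ - m ⟨k + i, by have := i.isLt; omega⟩,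
               fun j => m ⟨2 * k + j, by have := j.isLt; omega⟩))
    (by
      intro a b
      refine Prod.ext (funext fun i => ?_) (funext fun j => ?_)
      · simp; ring
      · rfl)

/-- The ring homomorphism
`φ_k : Rₙ → ℤ[x₁^{±1},…,x_k^{±1}, x_{2k+1}^{±1},…,xₙ^{±1}]` determined by
`xᵢ ↦ xᵢ` for `1 ≤ i ≤ k`, `x_{k+i} ↦ xᵢ⁻¹` for `1 ≤ i ≤ k`, and `xⱼ ↦ xⱼ`
for `2k < j ≤ n`. -/
def phi (n k : ℕ) (h : 2 * k ≤ n) :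
    R n →+* AddMonoidAlgebra ℤ ((Fin k → ℤ) × (Fin (n - 2 * k) → ℤ)) :=
  AddMonoidAlgebra.mapDomainRingHom ℤ (phiExp n k h)

/-- The numerator of `F`:
`(x₁x₂⋯x_{2k})^a ⬝ ∏_{1 ≤ i < j ≤ n, j > 2k} (1 - xᵢxⱼ)`, where the first
factor is the monomial with exponent `a` in each of the first `2k`
variables. -/
def numF (n k : ℕ) (a : ℤ) : R n :=
  AddMonoidAlgebra.single (fun i : Fin n => if (i : ℕ) < 2 * k then a else 0) (1 : ℤ) *
    ∏ p ∈ Finset.univ.filter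
        (fun p : Fin n × Fin n => p.1 < p.2 ∧ 2 * k ≤ (p.2 : ℕ)),
      (1 - X p.1 * X p.2)

/-- The denominator of `F`: `∏_{1 ≤ i < j ≤ n} (1 - xᵢ⁻¹ xⱼ)` (an element of
`Rₙ`, since `Rₙ` consists of Laurent polynomials). -/
def denF (n : ℕ) : R n :=
  ∏ p ∈ Finset.univ.filter (fun p : Fin n × Fin n => p.1 < p.2),
    (1 - Xinv p.1 * X p.2)

/-- The target ring `ℤ[x₁^{±1},…,x_k^{±1}, x_{2k+1}^{±1},…,xₙ^{±1}]` of `φ_k`. -/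
abbrev T (n k : ℕ) : Type := AddMonoidAlgebra ℤ ((Fin k → ℤ) × (Fin (n - 2 * k) → ℤ))

instance instIsDomainT (n k : ℕ) : IsDomain (T n k) := NoZeroDivisors.to_isDomain _

/-- The variable `x_{2k+j}` of the target ring `T n k` (`j` a `0`-based index
into the last `n - 2k` variables). -/
def Y {n k : ℕ} (j : Fin (n - 2 * k)) : T n k :=
  AddMonoidAlgebra.single ((0 : Fin k → ℤ), Pi.single j (1 : ℤ)) 1


open Finset

section Infra

variable (n k : ℕ) (hkn : 2 * k ≤ n)

lemma phi_single (g : Fin n → ℤ) (c : ℤ) :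
    phi n k hkn (AddMonoidAlgebra.single g c)
      = AddMonoidAlgebra.single (phiExp n k hkn g) c := by
  simp [phi, AddMonoidAlgebra.mapDomainRingHom_apply, Finsupp.mapDomain_single]

lemma permHom_single (w : Equiv.Perm (Fin n)) (g : Fin n → ℤ) (c : ℤ) :
    permHom w (AddMonoidAlgebra.single g c)
      = AddMonoidAlgebra.single (g ∘ w.symm) c := by
  simp [permHom, AddMonoidAlgebra.mapDomainRingHom_apply, Finsupp.mapDomain_single]
  rfl

lemma phiExp_apply (g : Fin n → ℤ) :
    phiExp n k hkn g = ((fun i : Fin k => g ⟨i, by have := i.isLt; omega⟩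
        - g ⟨k + i, by have := i.isLt; omega⟩),
      (fun j : Fin (n - 2*k) => g ⟨2*k + j, by have := j.isLt; omega⟩)) := rfl

lemma permHom_X (w : Equiv.Perm (Fin n)) (i : Fin n) : permHom w (X i) = X (w i) := by
  have h : (Pi.single i (1:ℤ)) ∘ ⇑w.symm = Pi.single (w i) (1:ℤ) := by
    funext x
    simp [Pi.single_apply, Equiv.symm_apply_eq]
  rw [X, permHom_single, h, X]

lemma permHom_Xinv (w : Equiv.Perm (Fin n)) (i : Fin n) :
    permHom w (Xinv i) = Xinv (w i) := by
  have h : (Pi.single i (-1:ℤ)) ∘ ⇑w.symm = Pi.single (w i) (-1:ℤ) := by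
    funext x
    simp [Pi.single_apply, Equiv.symm_apply_eq]
  rw [Xinv, permHom_single, h, Xinv]

end Infra

section Chunk2

variable (n k : ℕ) (hkn : 2 * k ≤ n)

lemma phiExp_single_fst (i : Fin n) (p : Fin k) :
    (phiExp n k hkn (Pi.single i (1:ℤ))).1 p
      = (if (p : ℕ) = (i : ℕ) then 1 else 0) - (if k + (p : ℕ) = (i : ℕ) then 1 else 0) := by
  rw [phiExp_apply]
  simp only [Pi.single_apply, Fin.ext_iff, Fin.val_mk]

lemma phiExp_single_snd (i : Fin n) (q : Fin (n - 2*k)) :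
    (phiExp n k hkn (Pi.single i (1:ℤ))).2 q
      = (if 2*k + (q : ℕ) = (i : ℕ) then 1 else 0) := by
  rw [phiExp_apply]
  simp only [Pi.single_apply, Fin.ext_iff, Fin.val_mk]

lemma E_inj : Function.Injective (fun i : Fin n => phiExp n k hkn (Pi.single i (1:ℤ))) := by
  intro i j h
  by_contra hne
  have hv : (i : ℕ) ≠ (j : ℕ) := fun hv => hne (Fin.ext hv)
  rcases Nat.lt_or_ge (i : ℕ) k with hik | hik
  · have h1 := congrFun (congrArg Prod.fst h) ⟨(i : ℕ), hik⟩
    rw [phiExp_single_fst, phiExp_single_fst] at h1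
    simp only [Fin.val_mk] at h1
    split_ifs at h1 <;> omega
  · rcases Nat.lt_or_ge (i : ℕ) (2*k) with hik2 | hik2
    · have h1 := congrFun (congrArg Prod.fst h) ⟨(i : ℕ) - k, by omega⟩
      rw [phiExp_single_fst, phiExp_single_fst] at h1
      simp only [Fin.val_mk] at h1
      split_ifs at h1 <;> omega
    · have h1 := congrFun (congrArg Prod.snd h) ⟨(i : ℕ) - 2*k, by have := i.isLt; omega⟩
      rw [phiExp_single_snd, phiExp_single_snd] at h1
      simp only [Fin.val_mk] at h1
      split_ifs at h1 <;> omega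

lemma E_partner (p : ℕ) (hp : p < k) :
    phiExp n k hkn (Pi.single (⟨k + p, by omega⟩ : Fin n) (1:ℤ))
      = - phiExp n k hkn (Pi.single (⟨p, by omega⟩ : Fin n) (1:ℤ)) := by
  refine Prod.ext (funext fun q => ?_) (funext fun q => ?_)
  · show (phiExp n k hkn (Pi.single _ 1)).1 q = -((phiExp n k hkn (Pi.single _ 1)).1 q)
    rw [phiExp_single_fst, phiExp_single_fst]
    simp only [Fin.val_mk]
    split_ifs <;> omega
  · show (phiExp n k hkn (Pi.single _ 1)).2 q = -((phiExp n k hkn (Pi.single _ 1)).2 q)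
    rw [phiExp_single_snd, phiExp_single_snd]
    simp only [Fin.val_mk]
    split_ifs <;> omega

lemma E_blockconst (a : ℤ) (g : Fin n → ℤ)
    (hg : ∀ i : Fin n, g i = if (i : ℕ) < 2*k then a else 0) :
    phiExp n k hkn g = 0 := by
  refine Prod.ext (funext fun q => ?_) (funext fun q => ?_)
  · rw [phiExp_apply]
    show g ⟨(q:ℕ), _⟩ - g ⟨k + (q:ℕ), _⟩ = (0 : (Fin k → ℤ) × (Fin (n-2*k) → ℤ)).1 q
    rw [hg, hg]
    simp only [Fin.val_mk]
    rw [if_pos (by omega : (q:ℕ) < 2*k), if_pos (by have := q.isLt; omega : k + (q:ℕ) < 2*k)]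
    simp
  · rw [phiExp_apply]
    show g ⟨2*k + (q:ℕ), _⟩ = (0 : (Fin k → ℤ) × (Fin (n-2*k) → ℤ)).2 q
    rw [hg]
    simp only [Fin.val_mk]
    rw [if_neg (by omega : ¬ (2*k + (q:ℕ) < 2*k))]
    rfl

lemma E_top (j : Fin (n - 2*k)) :
    phiExp n k hkn (Pi.single (⟨2*k + (j : ℕ), by have := j.isLt; omega⟩ : Fin n) (1:ℤ))
      = ((0 : Fin k → ℤ), Pi.single j (1:ℤ)) := by
  refine Prod.ext (funext fun q => ?_) (funext fun q => ?_)
  · rw [phiExp_single_fst]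
    show _ = (0:ℤ)
    simp only [Fin.val_mk]
    split_ifs <;> omega
  · rw [phiExp_single_snd]
    simp only [Pi.single_apply, Fin.ext_iff, Fin.val_mk]
    split_ifs <;> omega

end Chunk2

section Chunk3

variable (n k : ℕ) (hkn : 2 * k ≤ n)

/-- Abbreviation for the fraction field. -/
local notation "L" => FractionRing (T n k)

noncomputable def aux9Phi : R n →+* FractionRing (T n k) :=
  (algebraMap (T n k) (FractionRing (T n k))).comp (phi n k hkn)

noncomputable def aux9xi (i : Fin n) : FractionRing (T n k) := aux9Phi n k hkn (X i)

lemma aux9_amono_mul (g h : (Fin k → ℤ) × (Fin (n - 2*k) → ℤ)) :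
    algebraMap (T n k) L (AddMonoidAlgebra.single g (1:ℤ))
      * algebraMap (T n k) L (AddMonoidAlgebra.single h (1:ℤ))
      = algebraMap (T n k) L (AddMonoidAlgebra.single (g + h) (1:ℤ)) := by
  rw [← map_mul, AddMonoidAlgebra.single_mul_single, one_mul]

lemma aux9_amono_ne (g : (Fin k → ℤ) × (Fin (n - 2*k) → ℤ)) :
    algebraMap (T n k) L (AddMonoidAlgebra.single g (1:ℤ)) ≠ 0 := by
  rw [Ne, IsFractionRing.to_map_eq_zero_iff]
  exact fun h => one_ne_zero (AddMonoidAlgebra.single_eq_zero.mp h)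

lemma aux9_amono_inj {g h : (Fin k → ℤ) × (Fin (n - 2*k) → ℤ)}
    (hgh : algebraMap (T n k) L (AddMonoidAlgebra.single g (1:ℤ))
      = algebraMap (T n k) L (AddMonoidAlgebra.single h (1:ℤ))) : g = h := by
  have h1 := IsFractionRing.injective (T n k) L hgh
  rcases AddMonoidAlgebra.single_inj.1 h1 with ⟨h2, _⟩ | ⟨h2, _⟩
  · exact h2
  · exact absurd h2 one_ne_zero

lemma aux9_xi_eq (i : Fin n) : aux9xi n k hkn i
    = algebraMap (T n k) L
        (AddMonoidAlgebra.single (phiExp n k hkn (Pi.single i (1:ℤ))) (1:ℤ)) := by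
  rw [aux9xi, aux9Phi, RingHom.comp_apply, X, phi_single]

lemma aux9_xi_ne_zero (i : Fin n) : aux9xi n k hkn i ≠ 0 := by
  rw [aux9_xi_eq]; exact aux9_amono_ne n k _

lemma aux9_xi_inj {i j : Fin n} (h : aux9xi n k hkn i = aux9xi n k hkn j) : i = j := by
  rw [aux9_xi_eq, aux9_xi_eq] at h
  exact E_inj n k hkn (aux9_amono_inj n k h)

lemma aux9_Phi_Xinv (i : Fin n) :
    aux9Phi n k hkn (Xinv i) = (aux9xi n k hkn i)⁻¹ := by
  refine eq_inv_of_mul_eq_one_left ?_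
  rw [aux9xi, aux9Phi, RingHom.comp_apply, RingHom.comp_apply, Xinv, X, phi_single, phi_single,
    aux9_amono_mul]
  have h2 : (Pi.single i (-1:ℤ) : Fin n → ℤ) + Pi.single i (1:ℤ) = 0 := by
    funext x; simp only [Pi.add_apply, Pi.single_apply, Pi.zero_apply]; split_ifs <;> ring
  have h3 : phiExp n k hkn (Pi.single i (-1:ℤ)) + phiExp n k hkn (Pi.single i (1:ℤ)) = 0 := by
    rw [← map_add, h2, map_zero]
  rw [h3, ← AddMonoidAlgebra.one_def, map_one]

lemma aux9_xi_partner (p : ℕ) (hp : p < k) :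
    aux9xi n k hkn ⟨k + p, by omega⟩ = (aux9xi n k hkn ⟨p, by omega⟩)⁻¹ := by
  refine eq_inv_of_mul_eq_one_left ?_
  rw [aux9_xi_eq, aux9_xi_eq, aux9_amono_mul, E_partner n k hkn p hp, neg_add_cancel,
    ← AddMonoidAlgebra.one_def, map_one]

lemma aux9_Phi_denF (w : Equiv.Perm (Fin n)) :
    aux9Phi n k hkn (permHom w (denF n))
      = ∏ p ∈ Finset.univ.filter (fun p : Fin n × Fin n => p.1 < p.2),
          (1 - (aux9xi n k hkn (w p.1))⁻¹ * aux9xi n k hkn (w p.2)) := by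
  rw [denF, map_prod, map_prod]
  refine Finset.prod_congr rfl fun p _ => ?_
  rw [map_sub, map_one, map_mul, permHom_Xinv, permHom_X, map_sub, map_one, map_mul,
    aux9_Phi_Xinv]
  rfl

lemma aux9_Phi_numF (w : Equiv.Perm (Fin n)) (a : ℤ) :
    aux9Phi n k hkn (permHom w (numF n k a))
      = aux9Phi n k hkn (permHom w
          (AddMonoidAlgebra.single (fun i : Fin n => if (i : ℕ) < 2 * k then a else 0) (1:ℤ)))
        * ∏ p ∈ Finset.univ.filter
            (fun p : Fin n × Fin n => p.1 < p.2 ∧ 2 * k ≤ (p.2 : ℕ)),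
            (1 - aux9xi n k hkn (w p.1) * aux9xi n k hkn (w p.2)) := by
  rw [numF, map_mul, map_mul, map_prod, map_prod]
  congr 1
  refine Finset.prod_congr rfl fun p _ => ?_
  rw [map_sub, map_one, map_mul, permHom_X, permHom_X, map_sub, map_one, map_mul]
  rfl

lemma aux9_denF_ne (w : Equiv.Perm (Fin n)) :
    aux9Phi n k hkn (permHom w (denF n)) ≠ 0 := by
  rw [aux9_Phi_denF]
  refine Finset.prod_ne_zero_iff.2 fun p hp => ?_
  rw [Finset.mem_filter] at hp
  intro h0
  have h1 : (aux9xi n k hkn (w p.1))⁻¹ * aux9xi n k hkn (w p.2) = 1 := by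
    have := sub_eq_zero.mp h0; exact this.symm
  rw [inv_mul_eq_one₀ (aux9_xi_ne_zero n k hkn (w p.1))] at h1
  exact hp.2.ne (w.injective (aux9_xi_inj n k hkn h1))

end Chunk3

section Chunk4
open Finset

variable (n k : ℕ) (hkn : 2 * k ≤ n)

/-- Build a block permutation of `Fin n` from permutations of the two blocks. -/
noncomputable def aux9FF (u : Equiv.Perm (Fin (2*k))) (v : Equiv.Perm (Fin (n - 2*k))) :
    Equiv.Perm (Fin n) :=
  (finSumFinEquiv.trans (finCongr (by omega : 2*k + (n - 2*k) = n))).permCongr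
    (u.sumCongr v)

lemma aux9FF_bot (u : Equiv.Perm (Fin (2*k))) (v : Equiv.Perm (Fin (n - 2*k)))
    (i : Fin n) (h : (i : ℕ) < 2*k) :
    aux9FF n k hkn u v i
      = ⟨(u ⟨(i : ℕ), h⟩ : Fin (2*k)).val, by have := (u ⟨(i:ℕ), h⟩).isLt; omega⟩ := by
  rw [aux9FF, Equiv.permCongr_apply]
  have hsym : (finSumFinEquiv.trans (finCongr (by omega : 2*k + (n - 2*k) = n))).symm i
      = Sum.inl ⟨(i : ℕ), h⟩ := by
    rw [Equiv.symm_apply_eq]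
    apply Fin.ext
    simp
  rw [hsym]
  apply Fin.ext
  simp

lemma aux9FF_top (u : Equiv.Perm (Fin (2*k))) (v : Equiv.Perm (Fin (n - 2*k)))
    (i : Fin n) (h : 2*k ≤ (i : ℕ)) :
    aux9FF n k hkn u v i
      = ⟨2*k + (v ⟨(i : ℕ) - 2*k, by have := i.isLt; omega⟩ : Fin (n - 2*k)).val,
          by have := (v ⟨(i:ℕ) - 2*k, by have := i.isLt; omega⟩).isLt; omega⟩ := by
  rw [aux9FF, Equiv.permCongr_apply]
  have hsym : (finSumFinEquiv.trans (finCongr (by omega : 2*k + (n - 2*k) = n))).symm i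
      = Sum.inr ⟨(i : ℕ) - 2*k, by have := i.isLt; omega⟩ := by
    rw [Equiv.symm_apply_eq]
    apply Fin.ext
    simp
    omega
  rw [hsym]
  apply Fin.ext
  simp

lemma aux9FF_symm (u : Equiv.Perm (Fin (2*k))) (v : Equiv.Perm (Fin (n - 2*k))) :
    (aux9FF n k hkn u v).symm = aux9FF n k hkn u.symm v.symm := by
  refine Equiv.ext fun i => ?_
  rw [Equiv.symm_apply_eq]
  rcases Nat.lt_or_ge (i : ℕ) (2*k) with h | h
  · rw [aux9FF_bot n k hkn u.symm v.symm i h,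
      aux9FF_bot n k hkn u v _ (by simp [Fin.val_mk])]
    apply Fin.ext
    simp [Fin.eta]
  · rw [aux9FF_top n k hkn u.symm v.symm i h,
      aux9FF_top n k hkn u v _ (by simp [Fin.val_mk])]
    apply Fin.ext
    simp [Fin.eta]
    omega

lemma aux9_count (w : Equiv.Perm (Fin n))
    (hC : ∀ j : Fin n, 2*k ≤ (j : ℕ) → 2*k ≤ ((w j : Fin n) : ℕ)) :
    ∀ i : Fin n, (i : ℕ) < 2*k → ((w i : Fin n) : ℕ) < 2*k := by
  classical
  intro i hi
  by_contra hwi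
  set Tset := univ.filter (fun x : Fin n => 2*k ≤ (x : ℕ)) with hT
  have hsub : Tset.image w ⊆ Tset := by
    intro x hx
    rw [Finset.mem_image] at hx
    obtain ⟨y, hy, rfl⟩ := hx
    rw [Finset.mem_filter] at hy ⊢
    exact ⟨Finset.mem_univ _, hC y hy.2⟩
  have hcard : Tset.card ≤ (Tset.image w).card := by
    rw [Finset.card_image_of_injective _ w.injective]
  have heq : Tset.image w = Tset := Finset.eq_of_subset_of_card_le hsub hcard
  have hmem : w i ∈ Tset := by rw [Finset.mem_filter]; exact ⟨Finset.mem_univ _, by omega⟩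
  rw [← heq, Finset.mem_image] at hmem
  obtain ⟨y, hy, hyw⟩ := hmem
  have : y = i := w.injective hyw
  rw [Finset.mem_filter] at hy
  omega

end Chunk4

section Chunk4b
open Finset

variable (n k : ℕ) (hkn : 2 * k ≤ n)

def aux9EquivBot : {x : Fin n // (x : ℕ) < 2*k} ≃ Fin (2*k) where
  toFun x := ⟨(x.1 : ℕ), x.2⟩
  invFun i := ⟨⟨(i : ℕ), by have := i.isLt; omega⟩, by simp [Fin.val_mk]⟩
  left_inv x := by apply Subtype.ext; apply Fin.ext; simp
  right_inv i := by apply Fin.ext; simp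

def aux9EquivTop : {x : Fin n // ¬ (x : ℕ) < 2*k} ≃ Fin (n - 2*k) where
  toFun x := ⟨(x.1 : ℕ) - 2*k, by have := x.1.isLt; have := x.2; omega⟩
  invFun j := ⟨⟨2*k + (j : ℕ), by have := j.isLt; omega⟩, by simp [Fin.val_mk]⟩
  left_inv x := by
    apply Subtype.ext; apply Fin.ext; simp [Fin.val_mk]; have := x.2; omega
  right_inv j := by apply Fin.ext; simp

noncomputable def aux9GG (w : Equiv.Perm (Fin n))
    (hCw : ∀ i : Fin n, (i : ℕ) < 2*k ↔ ((w i : Fin n) : ℕ) < 2*k) :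
    Equiv.Perm (Fin (2*k)) × Equiv.Perm (Fin (n - 2*k)) :=
  ((aux9EquivBot n k hkn).permCongr (w.subtypePerm fun x => (hCw x).symm),
   (aux9EquivTop n k hkn).permCongr (w.subtypePerm fun x => not_congr (hCw x).symm))

lemma aux9GG_bot_val (w : Equiv.Perm (Fin n))
    (hCw : ∀ i : Fin n, (i : ℕ) < 2*k ↔ ((w i : Fin n) : ℕ) < 2*k) (i : Fin (2*k)) :
    (((aux9GG n k hkn w hCw).1 i : Fin (2*k)) : ℕ)
      = ((w ⟨(i : ℕ), by have := i.isLt; omega⟩ : Fin n) : ℕ) := by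
  simp [aux9GG, Equiv.permCongr_apply, aux9EquivBot, Equiv.Perm.subtypePerm_apply]

lemma aux9GG_top_val (w : Equiv.Perm (Fin n))
    (hCw : ∀ i : Fin n, (i : ℕ) < 2*k ↔ ((w i : Fin n) : ℕ) < 2*k) (j : Fin (n - 2*k)) :
    (((aux9GG n k hkn w hCw).2 j : Fin (n - 2*k)) : ℕ)
      = ((w ⟨2*k + (j : ℕ), by have := j.isLt; omega⟩ : Fin n) : ℕ) - 2*k := by
  simp [aux9GG, Equiv.permCongr_apply, aux9EquivTop, Equiv.Perm.subtypePerm_apply]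

lemma aux9FF_GG (w : Equiv.Perm (Fin n))
    (hCw : ∀ i : Fin n, (i : ℕ) < 2*k ↔ ((w i : Fin n) : ℕ) < 2*k) :
    aux9FF n k hkn (aux9GG n k hkn w hCw).1 (aux9GG n k hkn w hCw).2 = w := by
  refine Equiv.ext fun i => ?_
  rcases Nat.lt_or_ge (i : ℕ) (2*k) with h | h
  · rw [aux9FF_bot n k hkn _ _ i h]
    apply Fin.ext
    rw [Fin.val_mk, aux9GG_bot_val]
  · rw [aux9FF_top n k hkn _ _ i h]
    apply Fin.ext
    rw [Fin.val_mk, aux9GG_top_val]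
    have h1 : (⟨2*k + ((i:ℕ) - 2*k), by have := i.isLt; omega⟩ : Fin n) = i :=
      Fin.ext (by simp [Fin.val_mk]; omega)
    rw [h1]
    have h2 : 2*k ≤ ((w i : Fin n) : ℕ) := by
      by_contra hlt
      have := (hCw i).2 (by omega)
      omega
    omega

lemma aux9GG_FF (u : Equiv.Perm (Fin (2*k))) (v : Equiv.Perm (Fin (n - 2*k)))
    (hC : ∀ i : Fin n, (i : ℕ) < 2*k ↔ ((aux9FF n k hkn u v i : Fin n) : ℕ) < 2*k) :
    aux9GG n k hkn (aux9FF n k hkn u v) hC = (u, v) := by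
  have hbv := aux9GG_bot_val n k hkn (aux9FF n k hkn u v) hC
  have htv := aux9GG_top_val n k hkn (aux9FF n k hkn u v) hC
  refine Prod.ext (Equiv.ext fun i => Fin.ext ?_) (Equiv.ext fun j => Fin.ext ?_)
  · show _ = ((u i : Fin (2*k)) : ℕ)
    rw [hbv i, aux9FF_bot n k hkn u v _ (by simp [Fin.val_mk])]
  · show _ = ((v j : Fin (n - 2*k)) : ℕ)
    rw [htv j, aux9FF_top n k hkn u v _ (by simp [Fin.val_mk])]
    rw [Fin.val_mk]
    have harg : (⟨((⟨2*k + (j:ℕ), by have := j.isLt; omega⟩ : Fin n) : ℕ) - 2*k,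
        by have := j.isLt; simp [Fin.val_mk]⟩ : Fin (n - 2*k)) = j :=
      Fin.ext (by simp)
    rw [harg]
    omega

lemma aux9FF_C (u : Equiv.Perm (Fin (2*k))) (v : Equiv.Perm (Fin (n - 2*k))) :
    ∀ i : Fin n, (i : ℕ) < 2*k ↔ ((aux9FF n k hkn u v i : Fin n) : ℕ) < 2*k := by
  intro i
  constructor
  · intro h
    rw [aux9FF_bot n k hkn u v i h, Fin.val_mk]
    exact (u _).isLt
  · intro h
    by_contra hge
    rw [aux9FF_top n k hkn u v i (by omega), Fin.val_mk] at h
    omega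

end Chunk4b

section Chunk4c

variable (n k : ℕ) (hkn : 2 * k ≤ n)

def aux9pm : Fin n → Fin n := fun x =>
  if h : (x : ℕ) < k then ⟨(x : ℕ) + k, by omega⟩
  else if h2 : (x : ℕ) < 2*k then ⟨(x : ℕ) - k, by have := x.isLt; omega⟩
  else x

lemma aux9pm_lt (x : Fin n) (hx : (x : ℕ) < 2*k) :
    ((aux9pm n k hkn x : Fin n) : ℕ) < 2*k := by
  unfold aux9pm
  split_ifs with h1 h2 <;> simp only [Fin.val_mk] <;> omega

lemma aux9pm_ne (hk : 1 ≤ k) (x : Fin n) (hx : (x : ℕ) < 2*k) :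
    ((aux9pm n k hkn x : Fin n) : ℕ) ≠ (x : ℕ) := by
  unfold aux9pm
  split_ifs with h1 h2 <;> simp only [Fin.val_mk] <;> omega

lemma aux9pm_invol (x : Fin n) (hx : (x : ℕ) < 2*k) :
    aux9pm n k hkn (aux9pm n k hkn x) = x := by
  unfold aux9pm
  rcases Nat.lt_or_ge (x : ℕ) k with h | h
  · rw [dif_pos h, dif_neg (by simp only [Fin.val_mk]; omega),
      dif_pos (by simp only [Fin.val_mk]; omega)]
    exact Fin.ext (by simp only [Fin.val_mk]; omega)
  · rw [dif_neg (show ¬((x : ℕ) < k) by omega), dif_pos (show (x : ℕ) < 2*k from hx),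
      dif_pos (show ((⟨(x : ℕ) - k, by have := x.isLt; omega⟩ : Fin n) : ℕ) < k by
        simp only [Fin.val_mk]; omega)]
    exact Fin.ext (by simp only [Fin.val_mk]; omega)

lemma aux9pm_xi {K : Type*} [Field K] (ξ : Fin n → K)
    (hrel : ∀ p : ℕ, (hp : p < k) → ξ ⟨k + p, by omega⟩ = (ξ ⟨p, by omega⟩)⁻¹)
    (x : Fin n) (hx : (x : ℕ) < 2*k) :
    ξ (aux9pm n k hkn x) = (ξ x)⁻¹ := by
  unfold aux9pm
  rcases Nat.lt_or_ge (x : ℕ) k with h | h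
  · rw [dif_pos h]
    have e1 : ξ (⟨(x : ℕ) + k, by omega⟩ : Fin n) = ξ (⟨k + (x : ℕ), by omega⟩ : Fin n) :=
      congrArg ξ (Fin.ext (by simp only [Fin.val_mk]; omega))
    rw [e1, hrel (x : ℕ) h]
  · rw [dif_neg (show ¬((x : ℕ) < k) by omega), dif_pos (show (x : ℕ) < 2*k from hx)]
    have h2 := hrel ((x : ℕ) - k) (by omega)
    have e1 : (⟨k + ((x : ℕ) - k), by have := x.isLt; omega⟩ : Fin n) = x :=
      Fin.ext (by simp only [Fin.val_mk]; omega)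
    rw [e1] at h2
    rw [eq_comm, ← inv_inv (ξ (⟨(x:ℕ) - k, by have := x.isLt; omega⟩ : Fin n)), ← h2]

end Chunk4c

section Chunk5a
open Finset

variable {K : Type*} [CommMonoid K] (n k : ℕ) (hkn : 2 * k ≤ n)

set_option maxHeartbeats 2000000 in
lemma aux9_reindex_bot (u : Equiv.Perm (Fin (2*k))) (v : Equiv.Perm (Fin (n - 2*k)))
    (f : Fin n → Fin n → K) :
    ∏ p ∈ univ.filter (fun p : Fin n × Fin n => p.1 < p.2 ∧ ((p.2 : Fin n) : ℕ) < 2*k),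
      f (aux9FF n k hkn u v p.1) (aux9FF n k hkn u v p.2)
    = ∏ q ∈ univ.filter (fun q : Fin (2*k) × Fin (2*k) => q.1 < q.2),
        f ⟨((u q.1 : Fin (2*k)) : ℕ), by have := (u q.1).isLt; omega⟩
          ⟨((u q.2 : Fin (2*k)) : ℕ), by have := (u q.2).isLt; omega⟩ := by
  refine Finset.prod_bij'
    (fun p hp => ((⟨((p.1 : Fin n) : ℕ), by
        have h := (Finset.mem_filter.mp hp).2
        have h2 : ((p.1 : Fin n) : ℕ) < ((p.2 : Fin n) : ℕ) := h.1
        have := h.2; omega⟩ : Fin (2*k)),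
      (⟨((p.2 : Fin n) : ℕ), (Finset.mem_filter.mp hp).2.2⟩ : Fin (2*k))))
    (fun q _ => ((⟨((q.1 : Fin (2*k)) : ℕ), by have := (q.1).isLt; omega⟩ : Fin n),
      (⟨((q.2 : Fin (2*k)) : ℕ), by have := (q.2).isLt; omega⟩ : Fin n)))
    ?_ ?_ ?_ ?_ ?_
  · intro p hp
    have h := (Finset.mem_filter.mp hp).2
    have h2 : ((p.1 : Fin n) : ℕ) < ((p.2 : Fin n) : ℕ) := h.1
    rw [Finset.mem_filter]
    exact ⟨Finset.mem_univ _, by show (_ : ℕ) < (_ : ℕ); simp only [Fin.val_mk]; omega⟩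
  · intro q hq
    have h : ((q.1 : Fin (2*k)) : ℕ) < ((q.2 : Fin (2*k)) : ℕ) := (Finset.mem_filter.mp hq).2
    rw [Finset.mem_filter]
    refine ⟨Finset.mem_univ _, ?_, ?_⟩
    · show (_ : ℕ) < (_ : ℕ)
      simp only [Fin.val_mk]
      omega
    · simp only [Fin.val_mk]
      exact (q.2).isLt
  · intro p hp
    rfl
  · intro q hq
    rfl
  · intro p hp
    have h := (Finset.mem_filter.mp hp).2
    have h2 : ((p.1 : Fin n) : ℕ) < ((p.2 : Fin n) : ℕ) := h.1
    have h1 : ((p.1 : Fin n) : ℕ) < 2*k := by have := h.2; omega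
    rw [aux9FF_bot n k hkn u v p.1 h1, aux9FF_bot n k hkn u v p.2 h.2]

set_option maxHeartbeats 2000000 in
lemma aux9_reindex_top (u : Equiv.Perm (Fin (2*k))) (v : Equiv.Perm (Fin (n - 2*k)))
    (f : Fin n → Fin n → K) :
    ∏ p ∈ univ.filter (fun p : Fin n × Fin n => p.1 < p.2 ∧ 2*k ≤ ((p.1 : Fin n) : ℕ)),
      f (aux9FF n k hkn u v p.1) (aux9FF n k hkn u v p.2)
    = ∏ q ∈ univ.filter (fun q : Fin (n - 2*k) × Fin (n - 2*k) => q.1 < q.2),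
        f ⟨2*k + ((v q.1 : Fin (n - 2*k)) : ℕ), by have := (v q.1).isLt; omega⟩
          ⟨2*k + ((v q.2 : Fin (n - 2*k)) : ℕ), by have := (v q.2).isLt; omega⟩ := by
  refine Finset.prod_bij'
    (fun p hp => ((⟨((p.1 : Fin n) : ℕ) - 2*k,
        by have := (p.1 : Fin n).isLt; have := (Finset.mem_filter.mp hp).2.2; omega⟩
          : Fin (n - 2*k)),
      (⟨((p.2 : Fin n) : ℕ) - 2*k, by
        have h1 := (p.2 : Fin n).isLt
        have h2 := (Finset.mem_filter.mp hp).2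
        have h3 : ((p.1 : Fin n) : ℕ) < ((p.2 : Fin n) : ℕ) := h2.1
        have h4 := h2.2
        omega⟩ : Fin (n - 2*k))))
    (fun q _ => ((⟨2*k + ((q.1 : Fin (n - 2*k)) : ℕ), by have := (q.1).isLt; omega⟩ : Fin n),
      (⟨2*k + ((q.2 : Fin (n - 2*k)) : ℕ), by have := (q.2).isLt; omega⟩ : Fin n)))
    ?_ ?_ ?_ ?_ ?_
  · intro p hp
    have h := (Finset.mem_filter.mp hp).2
    have h2 : ((p.1 : Fin n) : ℕ) < ((p.2 : Fin n) : ℕ) := h.1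
    rw [Finset.mem_filter]
    refine ⟨Finset.mem_univ _, ?_⟩
    show (_ : ℕ) < (_ : ℕ)
    simp only [Fin.val_mk]
    have := h.2
    omega
  · intro q hq
    have h : ((q.1 : Fin (n - 2*k)) : ℕ) < ((q.2 : Fin (n - 2*k)) : ℕ) :=
      (Finset.mem_filter.mp hq).2
    rw [Finset.mem_filter]
    refine ⟨Finset.mem_univ _, ?_, ?_⟩
    · show (_ : ℕ) < (_ : ℕ)
      simp only [Fin.val_mk]
      omega
    · simp only [Fin.val_mk]
      omega
  · intro p hp
    have h := (Finset.mem_filter.mp hp).2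
    have h2 : 2*k ≤ ((p.1 : Fin n) : ℕ) := h.2
    have h3 : ((p.1 : Fin n) : ℕ) < ((p.2 : Fin n) : ℕ) := h.1
    dsimp only
    exact Prod.ext (Fin.ext (by simp only [Fin.val_mk]; omega))
      (Fin.ext (by simp only [Fin.val_mk]; omega))
  · intro q hq
    dsimp only
    exact Prod.ext (Fin.ext (by simp only [Fin.val_mk]; omega))
      (Fin.ext (by simp only [Fin.val_mk]; omega))
  · intro p hp
    have h := (Finset.mem_filter.mp hp).2
    have h2 : ((p.1 : Fin n) : ℕ) < ((p.2 : Fin n) : ℕ) := h.1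
    rw [aux9FF_top n k hkn u v p.1 h.2, aux9FF_top n k hkn u v p.2 (by omega)]

lemma aux9_reindex_mixed (u : Equiv.Perm (Fin (2*k))) (v : Equiv.Perm (Fin (n - 2*k)))
    (f : Fin n → Fin n → K) :
    ∏ p ∈ univ.filter (fun p : Fin n × Fin n =>
        p.1 < p.2 ∧ ((p.1 : Fin n) : ℕ) < 2*k ∧ 2*k ≤ ((p.2 : Fin n) : ℕ)),
      f (aux9FF n k hkn u v p.1) (aux9FF n k hkn u v p.2)
    = ∏ p ∈ univ.filter (fun p : Fin n × Fin n =>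
        p.1 < p.2 ∧ ((p.1 : Fin n) : ℕ) < 2*k ∧ 2*k ≤ ((p.2 : Fin n) : ℕ)),
      f p.1 p.2 := by
  have hWb : ∀ x : Fin n, (x : ℕ) < 2*k → ((aux9FF n k hkn u v x : Fin n) : ℕ) < 2*k :=
    fun x hx => (aux9FF_C n k hkn u v x).1 hx
  have hWt : ∀ x : Fin n, 2*k ≤ (x : ℕ) → 2*k ≤ ((aux9FF n k hkn u v x : Fin n) : ℕ) := by
    intro x hx
    by_contra hc
    have := (aux9FF_C n k hkn u v x).2 (by omega)
    omega
  have hWsb : ∀ x : Fin n, (x : ℕ) < 2*k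
      → (((aux9FF n k hkn u v).symm x : Fin n) : ℕ) < 2*k := by
    intro x hx
    by_contra hc
    have := hWt ((aux9FF n k hkn u v).symm x) (by omega)
    rw [Equiv.apply_symm_apply] at this
    omega
  have hWst : ∀ x : Fin n, 2*k ≤ (x : ℕ)
      → 2*k ≤ (((aux9FF n k hkn u v).symm x : Fin n) : ℕ) := by
    intro x hx
    by_contra hc
    have := hWb ((aux9FF n k hkn u v).symm x) (by omega)
    rw [Equiv.apply_symm_apply] at this
    omega
  refine Finset.prod_nbij'
    (fun p => (aux9FF n k hkn u v p.1, aux9FF n k hkn u v p.2))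
    (fun q => ((aux9FF n k hkn u v).symm q.1, (aux9FF n k hkn u v).symm q.2))
    ?_ ?_ ?_ ?_ ?_
  · intro p hp
    have h := (Finset.mem_filter.mp hp).2
    rw [Finset.mem_filter]
    have h1 := hWb p.1 h.2.1
    have h2 := hWt p.2 h.2.2
    exact ⟨Finset.mem_univ _, by show (_:ℕ) < (_:ℕ); dsimp only; omega, by dsimp only; omega,
      by dsimp only; omega⟩
  · intro q hq
    have h := (Finset.mem_filter.mp hq).2
    rw [Finset.mem_filter]
    have h1 := hWsb q.1 h.2.1
    have h2 := hWst q.2 h.2.2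
    exact ⟨Finset.mem_univ _, by show (_:ℕ) < (_:ℕ); dsimp only; omega, by dsimp only; omega,
      by dsimp only; omega⟩
  · intro p _
    simp
  · intro q _
    simp
  · intro p _
    rfl

end Chunk5a

open Finset

section AuxPairs

variable {K : Type*}

lemma prod_pairs_eq [CommMonoid K] {m : ℕ} (f : Fin m × Fin m → K) :
    ∏ p ∈ univ.filter (fun p : Fin m × Fin m => p.1 < p.2), f p
      = ∏ i, ∏ j ∈ Ioi i, f (i, j) := by
  rw [prod_filter, Fintype.prod_prod_type]
  refine Finset.prod_congr rfl fun i _ => ?_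
  rw [← prod_filter (fun j => i < j) (fun j => f (i, j))]
  congr 1
  ext j; simp

lemma prod_pairs_mul [CommMonoid K] {m : ℕ} (g : Fin m → K) :
    ∏ i, ∏ j ∈ Finset.Ioi i, (g i * g j) = ∏ i, g i ^ (m - 1) := by
  have h2 : (∏ i, ∏ _j ∈ Finset.Ioi i, g i) = ∏ i, g i ^ (m - 1 - (i : ℕ)) :=
    Finset.prod_congr rfl fun i _ => by rw [Finset.prod_const, Fin.card_Ioi]
  have h3 : (∏ i, ∏ j ∈ Finset.Ioi i, g j) = ∏ j, g j ^ (j : ℕ) := by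
    rw [Finset.prod_comm' (t' := Finset.univ) (s' := fun y => Finset.Iio y)
      (fun x y => by simp)]
    exact Finset.prod_congr rfl fun j _ => by rw [Finset.prod_const, Fin.card_Iio]
  calc ∏ i, ∏ j ∈ Finset.Ioi i, (g i * g j)
      = (∏ i, ∏ _j ∈ Finset.Ioi i, g i) * (∏ i, ∏ j ∈ Finset.Ioi i, g j) := by
        rw [← Finset.prod_mul_distrib]
        exact Finset.prod_congr rfl fun i _ => Finset.prod_mul_distrib
    _ = ∏ i, g i ^ (m - 1 - (i : ℕ)) * g i ^ (i : ℕ) := by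
        rw [h2, h3, ← Finset.prod_mul_distrib]
    _ = ∏ i, g i ^ (m - 1) := Finset.prod_congr rfl fun i _ => by
        rw [← pow_add]; congr 1; have := i.isLt; omega

lemma det_revVandermonde [Field K] {m : ℕ} (y : Fin m → K) (hy : ∀ i, y i ≠ 0) :
    Matrix.det (Matrix.of fun i j : Fin m => y i ^ (m - 1 - (j : ℕ)))
      = ∏ i, ∏ j ∈ Ioi i, (y i - y j) := by
  have key : (Matrix.of fun i j : Fin m => y i ^ (m - 1 - (j : ℕ)))
      = Matrix.diagonal (fun i => y i ^ (m - 1)) * Matrix.vandermonde (fun i => (y i)⁻¹) := by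
    ext i j
    rw [Matrix.diagonal_mul, Matrix.vandermonde_apply, Matrix.of_apply,
      pow_sub₀ (y i) (hy i) (by have := j.isLt; omega), inv_pow]
  rw [key, Matrix.det_mul, Matrix.det_diagonal, Matrix.det_vandermonde]
  have hfac : ∀ i j : Fin m, (y j)⁻¹ - (y i)⁻¹ = (y i - y j) * ((y i)⁻¹ * (y j)⁻¹) := by
    intro i j
    rw [sub_mul,
      show y i * ((y i)⁻¹ * (y j)⁻¹) = (y j)⁻¹ by
        rw [← mul_assoc, mul_inv_cancel₀ (hy i), one_mul],
      show y j * ((y i)⁻¹ * (y j)⁻¹) = (y i)⁻¹ by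
        rw [mul_comm (y i)⁻¹, ← mul_assoc, mul_inv_cancel₀ (hy j), one_mul]]
  calc (∏ i, y i ^ (m - 1)) * ∏ i, ∏ j ∈ Ioi i, ((fun i => (y i)⁻¹) j - (fun i => (y i)⁻¹) i)
      = (∏ i, y i ^ (m - 1)) * ∏ i, ∏ j ∈ Ioi i, ((y i - y j) * ((y i)⁻¹ * (y j)⁻¹)) := by
        congr 1
        exact Finset.prod_congr rfl fun i _ => Finset.prod_congr rfl fun j _ => hfac i j
    _ = (∏ i, y i ^ (m - 1)) * ((∏ i, ∏ j ∈ Ioi i, (y i - y j))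
          * ∏ i, ∏ j ∈ Ioi i, ((y i)⁻¹ * (y j)⁻¹)) := by
        congr 1
        rw [← Finset.prod_mul_distrib]
        exact Finset.prod_congr rfl fun i _ => Finset.prod_mul_distrib
    _ = ∏ i, ∏ j ∈ Ioi i, (y i - y j) := by
        have hc : ∏ i, ∏ j ∈ Ioi i, ((y i)⁻¹ * (y j)⁻¹) = ∏ i, ((y i)⁻¹) ^ (m - 1) :=
          prod_pairs_mul _
        have hone : (∏ i, y i ^ (m - 1)) * ∏ i, ((y i)⁻¹) ^ (m - 1) = 1 := by
          rw [← Finset.prod_mul_distrib]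
          refine Finset.prod_eq_one fun i _ => ?_
          rw [← mul_pow, mul_inv_cancel₀ (hy i), one_pow]
        rw [hc, show (∏ i, y i ^ (m - 1)) * ((∏ i, ∏ j ∈ Ioi i, (y i - y j))
              * ∏ i, ((y i)⁻¹) ^ (m - 1))
            = ((∏ i, y i ^ (m - 1)) * ∏ i, ((y i)⁻¹) ^ (m - 1))
              * (∏ i, ∏ j ∈ Ioi i, (y i - y j)) from by ring, hone, one_mul]

lemma sum_perm_inv_prod [Field K] {m : ℕ} (y : Fin m → K)
    (h0 : ∀ i, y i ≠ 0) (hinj : Function.Injective y) :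
    ∑ v : Equiv.Perm (Fin m),
      (∏ p ∈ univ.filter (fun p : Fin m × Fin m => p.1 < p.2),
        (1 - (y (v p.1))⁻¹ * y (v p.2)))⁻¹ = 1 := by
  classical
  set Δ : K := ∏ i, ∏ j ∈ Ioi i, (y i - y j) with hΔdef
  have hΔ : Δ ≠ 0 := by
    rw [hΔdef]
    refine Finset.prod_ne_zero_iff.2 fun i _ => Finset.prod_ne_zero_iff.2 fun j hj => ?_
    exact sub_ne_zero_of_ne fun h => (Finset.mem_Ioi.mp hj).ne (hinj h)
  -- the sign of v as an element of K
  have hperm : ∀ v : Equiv.Perm (Fin m),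
      ∏ i, ∏ j ∈ Ioi i, (y (v i) - y (v j)) = ((Equiv.Perm.sign v : ℤ) : K) * Δ := by
    intro v
    have h1 := det_revVandermonde (fun i => y (v i)) (fun i => h0 (v i))
    have h2 : (Matrix.of fun i j : Fin m => y (v i) ^ (m - 1 - (j : ℕ)))
        = (Matrix.of fun i j : Fin m => y i ^ (m - 1 - (j : ℕ))).submatrix (⇑v) id := rfl
    rw [h2, Matrix.det_permute, det_revVandermonde y h0] at h1
    rw [← h1, hΔdef]
  have hterm : ∀ v : Equiv.Perm (Fin m),
      (∏ p ∈ univ.filter (fun p : Fin m × Fin m => p.1 < p.2),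
        (1 - (y (v p.1))⁻¹ * y (v p.2)))⁻¹
      = ((Equiv.Perm.sign v : ℤ) : K) * Δ⁻¹ * ∏ i, y (v i) ^ (m - 1 - (i : ℕ)) := by
    intro v
    rw [prod_pairs_eq]
    have e1 : ∀ i : Fin m, ∀ j ∈ Ioi i, (1 - (y (v i))⁻¹ * y (v j))
        = (y (v i))⁻¹ * (y (v i) - y (v j)) := by
      intro i j _
      rw [mul_sub, inv_mul_cancel₀ (h0 (v i))]
    rw [Finset.prod_congr rfl (fun i _ => Finset.prod_congr rfl (e1 i))]
    have e2 : ∏ i, ∏ j ∈ Ioi i, ((y (v i))⁻¹ * (y (v i) - y (v j)))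
        = (∏ i, ((y (v i))⁻¹) ^ (m - 1 - (i : ℕ))) * ∏ i, ∏ j ∈ Ioi i, (y (v i) - y (v j)) := by
      rw [← Finset.prod_mul_distrib]
      refine Finset.prod_congr rfl fun i _ => ?_
      rw [Finset.prod_mul_distrib, Finset.prod_const, Fin.card_Ioi]
    rw [e2, hperm v, mul_inv, mul_inv]
    have hsgn : (((Equiv.Perm.sign v : ℤ) : K))⁻¹ = ((Equiv.Perm.sign v : ℤ) : K) := by
      rcases Int.units_eq_one_or (Equiv.Perm.sign v) with h | h <;> rw [h] <;> norm_num
    rw [hsgn]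
    have hprodinv : (∏ i, ((y (v i))⁻¹) ^ (m - 1 - (i : ℕ)))⁻¹
        = ∏ i, (y (v i)) ^ (m - 1 - (i : ℕ)) := by
      rw [← Finset.prod_inv_distrib]
      exact Finset.prod_congr rfl fun i _ => by rw [inv_pow, inv_inv]
    rw [hprodinv]
    ring
  rw [Finset.sum_congr rfl fun v _ => hterm v]
  have hdet := det_revVandermonde y h0
  rw [Matrix.det_apply] at hdet
  have : ∑ v : Equiv.Perm (Fin m),
      ((Equiv.Perm.sign v : ℤ) : K) * Δ⁻¹ * ∏ i, y (v i) ^ (m - 1 - (i : ℕ))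
      = Δ⁻¹ * ∑ v : Equiv.Perm (Fin m),
          Equiv.Perm.sign v • ∏ i, (Matrix.of fun i j : Fin m => y i ^ (m - 1 - (j : ℕ))) (v i) i := by
    rw [Finset.mul_sum]
    refine Finset.sum_congr rfl fun v _ => ?_
    simp only [Matrix.of_apply]
    rw [Units.smul_def, zsmul_eq_mul]
    push_cast
    ring
  rw [this, hdet, inv_mul_cancel₀ hΔ]

end AuxPairs

lemma prod_pairs_perm {K : Type*} [CommMonoid K] {m : ℕ} (σ : Equiv.Perm (Fin m))
    (f : Fin m → Fin m → K) (hf : ∀ i j, f i j = f j i) :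
    ∏ p ∈ univ.filter (fun p : Fin m × Fin m => p.1 < p.2), f (σ p.1) (σ p.2)
      = ∏ p ∈ univ.filter (fun p : Fin m × Fin m => p.1 < p.2), f p.1 p.2 := by
  classical
  refine Finset.prod_nbij'
    (fun p => if σ p.1 < σ p.2 then (σ p.1, σ p.2) else (σ p.2, σ p.1))
    (fun q => if σ.symm q.1 < σ.symm q.2 then (σ.symm q.1, σ.symm q.2)
      else (σ.symm q.2, σ.symm q.1)) ?_ ?_ ?_ ?_ ?_
  · intro p hp
    simp only [Finset.mem_filter, Finset.mem_univ, true_and] at hp ⊢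
    split_ifs with h
    · exact h
    · have hne : σ p.2 ≠ σ p.1 := fun h' => hp.ne' (σ.injective h')
      exact lt_of_le_of_ne (not_lt.mp h) hne
  · intro q hq
    simp only [Finset.mem_filter, Finset.mem_univ, true_and] at hq ⊢
    split_ifs with h
    · exact h
    · have hne : σ.symm q.2 ≠ σ.symm q.1 := fun h' => hq.ne' (σ.symm.injective h')
      exact lt_of_le_of_ne (not_lt.mp h) hne
  · intro p hp
    simp only [Finset.mem_filter, Finset.mem_univ, true_and] at hp
    by_cases h1 : σ p.1 < σ p.2
    · rw [if_pos h1]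
      simp only [Equiv.symm_apply_apply]
      rw [if_pos hp]
    · rw [if_neg h1]
      simp only [Equiv.symm_apply_apply]
      rw [if_neg (not_lt.mpr hp.le)]
  · intro q hq
    simp only [Finset.mem_filter, Finset.mem_univ, true_and] at hq
    by_cases h1 : σ.symm q.1 < σ.symm q.2
    · rw [if_pos h1]
      simp only [Equiv.apply_symm_apply]
      rw [if_pos hq]
    · rw [if_neg h1]
      simp only [Equiv.apply_symm_apply]
      rw [if_neg (not_lt.mpr hq.le)]
  · intro p hp
    by_cases h : σ p.1 < σ p.2
    · rw [if_pos h]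
    · rw [if_neg h]
      exact hf _ _

section Chunk5
open Finset

set_option maxHeartbeats 4000000 in
lemma aux9_main_sum {K : Type*} [Field K] (n k : ℕ) (hk : 1 ≤ k) (hkn : 2 * k ≤ n)
    (ξ : Fin n → K) (h0 : ∀ i, ξ i ≠ 0) (hinj : ∀ i j : Fin n, ξ i = ξ j → i = j)
    (hrel : ∀ p : ℕ, (hp : p < k) → ξ ⟨k + p, by omega⟩ = (ξ ⟨p, by omega⟩)⁻¹)
    (A : Equiv.Perm (Fin n) → K)
    (hA : ∀ w : Equiv.Perm (Fin n),
      (∀ i : Fin n, (i : ℕ) < 2*k ↔ ((w i : Fin n) : ℕ) < 2*k) → A w = 1) :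
    ∑ w : Equiv.Perm (Fin n),
      (A w * ∏ p ∈ univ.filter (fun p : Fin n × Fin n => p.1 < p.2 ∧ 2*k ≤ ((p.2 : Fin n) : ℕ)),
          (1 - ξ (w p.1) * ξ (w p.2)))
        * (∏ p ∈ univ.filter (fun p : Fin n × Fin n => p.1 < p.2),
            (1 - (ξ (w p.1))⁻¹ * ξ (w p.2)))⁻¹
      = ∏ q ∈ univ.filter (fun q : Fin (n - 2*k) × Fin (n - 2*k) => q.1 < q.2),
          (1 - ξ ⟨2*k + ((q.1 : Fin (n - 2*k)) : ℕ), by have := (q.1 : Fin (n - 2*k)).isLt; omega⟩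
             * ξ ⟨2*k + ((q.2 : Fin (n - 2*k)) : ℕ), by have := (q.2 : Fin (n - 2*k)).isLt; omega⟩) := by
  classical
  have hfac_ne : ∀ i j : Fin n, i ≠ j → 1 - (ξ i)⁻¹ * ξ j ≠ 0 := by
    intro i j hij h
    have h1 : (ξ i)⁻¹ * ξ j = 1 := (sub_eq_zero.mp h).symm
    rw [inv_mul_eq_one₀ (h0 i)] at h1
    exact hij (hinj i j h1)
  set B : Equiv.Perm (Fin n) → K := fun w =>
    (A w * ∏ p ∈ univ.filter (fun p : Fin n × Fin n => p.1 < p.2 ∧ 2*k ≤ ((p.2 : Fin n) : ℕ)),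
        (1 - ξ (w p.1) * ξ (w p.2)))
      * (∏ p ∈ univ.filter (fun p : Fin n × Fin n => p.1 < p.2),
          (1 - (ξ (w p.1))⁻¹ * ξ (w p.2)))⁻¹ with hB
  set y1 : Fin (2*k) → K := fun i => ξ ⟨(i : ℕ), by have := i.isLt; omega⟩ with hy1
  set y2 : Fin (n - 2*k) → K := fun j => ξ ⟨2*k + (j : ℕ), by have := j.isLt; omega⟩ with hy2
  have hy1ne : ∀ i, y1 i ≠ 0 := fun i => h0 _
  have hy2ne : ∀ j, y2 j ≠ 0 := fun j => h0 _
  have hy1inj : Function.Injective y1 := by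
    intro i j h
    have h2 := congrArg Fin.val (hinj _ _ h)
    simp only [Fin.val_mk] at h2
    exact Fin.ext h2
  have hy2inj : Function.Injective y2 := by
    intro i j h
    have h2 := congrArg Fin.val (hinj _ _ h)
    simp only [Fin.val_mk] at h2
    exact Fin.ext (by omega)
  set Att : K := ∏ q ∈ univ.filter (fun q : Fin (n - 2*k) × Fin (n - 2*k) => q.1 < q.2),
      (1 - y2 q.1 * y2 q.2) with hAtt
  set D1 : Equiv.Perm (Fin (2*k)) → K := fun u =>
      ∏ q ∈ univ.filter (fun q : Fin (2*k) × Fin (2*k) => q.1 < q.2),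
        (1 - (y1 (u q.1))⁻¹ * y1 (u q.2)) with hD1
  set D2 : Equiv.Perm (Fin (n - 2*k)) → K := fun v =>
      ∏ q ∈ univ.filter (fun q : Fin (n - 2*k) × Fin (n - 2*k) => q.1 < q.2),
        (1 - (y2 (v q.1))⁻¹ * y2 (v q.2)) with hD2
  set Bm : K := ∏ p ∈ univ.filter (fun p : Fin n × Fin n =>
      p.1 < p.2 ∧ ((p.1 : Fin n) : ℕ) < 2*k ∧ 2*k ≤ ((p.2 : Fin n) : ℕ)),
      (1 - (ξ p.1)⁻¹ * ξ p.2) with hBm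
  have hBmne : Bm ≠ 0 := by
    rw [hBm]
    refine Finset.prod_ne_zero_iff.2 fun p hp => ?_
    have h := (Finset.mem_filter.mp hp).2
    exact hfac_ne _ _ h.1.ne
  have hD1ne : ∀ u, D1 u ≠ 0 := by
    intro u
    rw [hD1]
    refine Finset.prod_ne_zero_iff.2 fun q hq => ?_
    have hlt : q.1 < q.2 := (Finset.mem_filter.mp hq).2
    refine hfac_ne _ _ ?_
    intro h
    have h2 := congrArg Fin.val h
    simp only [Fin.val_mk] at h2
    exact hlt.ne (u.injective (Fin.ext h2))
  have hD2ne : ∀ v, D2 v ≠ 0 := by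
    intro v
    rw [hD2]
    refine Finset.prod_ne_zero_iff.2 fun q hq => ?_
    have hlt : q.1 < q.2 := (Finset.mem_filter.mp hq).2
    refine hfac_ne _ _ ?_
    intro h
    have h2 := congrArg Fin.val h
    simp only [Fin.val_mk] at h2
    exact hlt.ne (v.injective (Fin.ext (by omega)))
  -- set splittings
  have hsplit1 : (univ.filter (fun p : Fin n × Fin n => p.1 < p.2)).filter
      (fun p => ((p.2 : Fin n) : ℕ) < 2*k)
      = univ.filter (fun p : Fin n × Fin n => p.1 < p.2 ∧ ((p.2 : Fin n) : ℕ) < 2*k) := by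
    rw [Finset.filter_filter]
  have hsplit2 : (univ.filter (fun p : Fin n × Fin n => p.1 < p.2)).filter
      (fun p => ¬ ((p.2 : Fin n) : ℕ) < 2*k)
      = univ.filter (fun p : Fin n × Fin n => p.1 < p.2 ∧ 2*k ≤ ((p.2 : Fin n) : ℕ)) := by
    rw [Finset.filter_filter]
    ext p
    simp only [Finset.mem_filter, Finset.mem_univ, true_and, not_lt]
  have hsplit3 : (univ.filter (fun p : Fin n × Fin n =>
        p.1 < p.2 ∧ 2*k ≤ ((p.2 : Fin n) : ℕ))).filter (fun p => ((p.1 : Fin n) : ℕ) < 2*k)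
      = univ.filter (fun p : Fin n × Fin n =>
        p.1 < p.2 ∧ ((p.1 : Fin n) : ℕ) < 2*k ∧ 2*k ≤ ((p.2 : Fin n) : ℕ)) := by
    rw [Finset.filter_filter]
    ext p
    simp only [Finset.mem_filter, Finset.mem_univ, true_and]
    tauto
  have hsplit4 : (univ.filter (fun p : Fin n × Fin n =>
        p.1 < p.2 ∧ 2*k ≤ ((p.2 : Fin n) : ℕ))).filter (fun p => ¬ ((p.1 : Fin n) : ℕ) < 2*k)
      = univ.filter (fun p : Fin n × Fin n => p.1 < p.2 ∧ 2*k ≤ ((p.1 : Fin n) : ℕ)) := by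
    rw [Finset.filter_filter]
    ext p
    simp only [Finset.mem_filter, Finset.mem_univ, true_and, not_lt, Fin.lt_def]
    omega
  have hprodSN : ∀ g : Fin n × Fin n → K,
      ∏ p ∈ univ.filter (fun p : Fin n × Fin n => p.1 < p.2 ∧ 2*k ≤ ((p.2 : Fin n) : ℕ)), g p
      = (∏ p ∈ univ.filter (fun p : Fin n × Fin n =>
            p.1 < p.2 ∧ ((p.1 : Fin n) : ℕ) < 2*k ∧ 2*k ≤ ((p.2 : Fin n) : ℕ)), g p)
        * (∏ p ∈ univ.filter (fun p : Fin n × Fin n =>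
            p.1 < p.2 ∧ 2*k ≤ ((p.1 : Fin n) : ℕ)), g p) := by
    intro g
    rw [← Finset.prod_filter_mul_prod_filter_not
      (univ.filter (fun p : Fin n × Fin n => p.1 < p.2 ∧ 2*k ≤ ((p.2 : Fin n) : ℕ)))
      (fun p => ((p.1 : Fin n) : ℕ) < 2*k) g, hsplit3, hsplit4]
  have hprodSP : ∀ g : Fin n × Fin n → K,
      ∏ p ∈ univ.filter (fun p : Fin n × Fin n => p.1 < p.2), g p
      = (∏ p ∈ univ.filter (fun p : Fin n × Fin n =>
            p.1 < p.2 ∧ ((p.2 : Fin n) : ℕ) < 2*k), g p)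
        * ((∏ p ∈ univ.filter (fun p : Fin n × Fin n =>
            p.1 < p.2 ∧ ((p.1 : Fin n) : ℕ) < 2*k ∧ 2*k ≤ ((p.2 : Fin n) : ℕ)), g p)
          * (∏ p ∈ univ.filter (fun p : Fin n × Fin n =>
            p.1 < p.2 ∧ 2*k ≤ ((p.1 : Fin n) : ℕ)), g p)) := by
    intro g
    rw [← Finset.prod_filter_mul_prod_filter_not
      (univ.filter (fun p : Fin n × Fin n => p.1 < p.2))
      (fun p => ((p.2 : Fin n) : ℕ) < 2*k) g, hsplit1, hsplit2, hprodSN g]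
  -- the partner identity
  have hpartner : ∏ p ∈ univ.filter (fun p : Fin n × Fin n =>
      p.1 < p.2 ∧ ((p.1 : Fin n) : ℕ) < 2*k ∧ 2*k ≤ ((p.2 : Fin n) : ℕ)),
      (1 - ξ p.1 * ξ p.2) = Bm := by
    rw [hBm]
    refine Finset.prod_nbij' (fun p => (aux9pm n k hkn p.1, p.2))
      (fun p => (aux9pm n k hkn p.1, p.2)) ?_ ?_ ?_ ?_ ?_
    · intro p hp
      have h := (Finset.mem_filter.mp hp).2
      have h1 := aux9pm_lt n k hkn p.1 h.2.1
      rw [Finset.mem_filter]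
      refine ⟨Finset.mem_univ _, ?_, ?_, ?_⟩
      · show (_ : ℕ) < (_ : ℕ)
        dsimp only
        have h2 : ((p.1 : Fin n) : ℕ) < ((p.2 : Fin n) : ℕ) := h.1
        have h3 := h.2.2
        omega
      · dsimp only
        omega
      · dsimp only
        exact h.2.2
    · intro p hp
      have h := (Finset.mem_filter.mp hp).2
      have h1 := aux9pm_lt n k hkn p.1 h.2.1
      rw [Finset.mem_filter]
      refine ⟨Finset.mem_univ _, ?_, ?_, ?_⟩
      · show (_ : ℕ) < (_ : ℕ)
        dsimp only
        have h2 : ((p.1 : Fin n) : ℕ) < ((p.2 : Fin n) : ℕ) := h.1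
        have h3 := h.2.2
        omega
      · dsimp only
        omega
      · dsimp only
        exact h.2.2
    · intro p hp
      have h := (Finset.mem_filter.mp hp).2
      dsimp only
      rw [aux9pm_invol n k hkn p.1 h.2.1]
    · intro p hp
      have h := (Finset.mem_filter.mp hp).2
      dsimp only
      rw [aux9pm_invol n k hkn p.1 h.2.1]
    · intro p hp
      have h := (Finset.mem_filter.mp hp).2
      dsimp only
      rw [aux9pm_xi n k hkn ξ hrel p.1 h.2.1, inv_inv]
  -- main per-term computation
  have hterm : ∀ (u : Equiv.Perm (Fin (2*k))) (v : Equiv.Perm (Fin (n - 2*k))),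
      B (aux9FF n k hkn u v) = Att * (D1 u)⁻¹ * (D2 v)⁻¹ := by
    intro u v
    have hnum_m : ∏ p ∈ univ.filter (fun p : Fin n × Fin n =>
        p.1 < p.2 ∧ ((p.1 : Fin n) : ℕ) < 2*k ∧ 2*k ≤ ((p.2 : Fin n) : ℕ)),
        (1 - ξ (aux9FF n k hkn u v p.1) * ξ (aux9FF n k hkn u v p.2))
        = Bm :=
      (aux9_reindex_mixed n k hkn u v (fun a b => 1 - ξ a * ξ b)).trans hpartner
    have hnum_t : ∏ p ∈ univ.filter (fun p : Fin n × Fin n =>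
        p.1 < p.2 ∧ 2*k ≤ ((p.1 : Fin n) : ℕ)),
        (1 - ξ (aux9FF n k hkn u v p.1) * ξ (aux9FF n k hkn u v p.2))
        = Att := by
      have h1 : ∏ p ∈ univ.filter (fun p : Fin n × Fin n =>
          p.1 < p.2 ∧ 2*k ≤ ((p.1 : Fin n) : ℕ)),
          (1 - ξ (aux9FF n k hkn u v p.1) * ξ (aux9FF n k hkn u v p.2))
          = ∏ q ∈ univ.filter (fun q : Fin (n - 2*k) × Fin (n - 2*k) => q.1 < q.2),
              (1 - y2 (v q.1) * y2 (v q.2)) :=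
        aux9_reindex_top n k hkn u v (fun a b => 1 - ξ a * ξ b)
      rw [h1, hAtt]
      exact prod_pairs_perm v (fun i j => 1 - y2 i * y2 j) (fun i j => by ring)
    have hden_b : ∏ p ∈ univ.filter (fun p : Fin n × Fin n =>
        p.1 < p.2 ∧ ((p.2 : Fin n) : ℕ) < 2*k),
        (1 - (ξ (aux9FF n k hkn u v p.1))⁻¹ * ξ (aux9FF n k hkn u v p.2))
        = D1 u :=
      aux9_reindex_bot n k hkn u v (fun a b => 1 - (ξ a)⁻¹ * ξ b)
    have hden_m : ∏ p ∈ univ.filter (fun p : Fin n × Fin n =>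
        p.1 < p.2 ∧ ((p.1 : Fin n) : ℕ) < 2*k ∧ 2*k ≤ ((p.2 : Fin n) : ℕ)),
        (1 - (ξ (aux9FF n k hkn u v p.1))⁻¹ * ξ (aux9FF n k hkn u v p.2))
        = Bm := by
      rw [hBm]
      exact aux9_reindex_mixed n k hkn u v (fun a b => 1 - (ξ a)⁻¹ * ξ b)
    have hden_t : ∏ p ∈ univ.filter (fun p : Fin n × Fin n =>
        p.1 < p.2 ∧ 2*k ≤ ((p.1 : Fin n) : ℕ)),
        (1 - (ξ (aux9FF n k hkn u v p.1))⁻¹ * ξ (aux9FF n k hkn u v p.2))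
        = D2 v :=
      aux9_reindex_top n k hkn u v (fun a b => 1 - (ξ a)⁻¹ * ξ b)
    rw [hB]
    dsimp only
    rw [hA _ (aux9FF_C n k hkn u v), one_mul]
    rw [hprodSN (fun p => 1 - ξ (aux9FF n k hkn u v p.1) * ξ (aux9FF n k hkn u v p.2))]
    rw [hprodSP (fun p => 1 - (ξ (aux9FF n k hkn u v p.1))⁻¹ * ξ (aux9FF n k hkn u v p.2))]
    rw [hnum_m, hnum_t, hden_b, hden_m, hden_t]
    rw [mul_inv, mul_inv]
    calc Bm * Att * ((D1 u)⁻¹ * (Bm⁻¹ * (D2 v)⁻¹))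
        = Att * (D1 u)⁻¹ * (D2 v)⁻¹ * (Bm * Bm⁻¹) := by ring
      _ = Att * (D1 u)⁻¹ * (D2 v)⁻¹ := by rw [mul_inv_cancel₀ hBmne, mul_one]
  -- vanishing off the block permutations
  have hvan : ∀ w : Equiv.Perm (Fin n),
      ¬ (∀ i : Fin n, (i : ℕ) < 2*k ↔ ((w i : Fin n) : ℕ) < 2*k) → B w = 0 := by
    intro w hw
    have hexists : ∃ j : Fin n, 2*k ≤ (j : ℕ) ∧ ((w j : Fin n) : ℕ) < 2*k := by
      by_contra hno
      push_neg at hno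
      refine hw fun i => ⟨fun h => ?_, fun h => ?_⟩
      · exact aux9_count n k w (fun j hj => hno j hj) i h
      · by_contra hh
        have := hno i (by omega)
        omega
    obtain ⟨j, hj, hwj⟩ := hexists
    have hyxi : ξ (aux9pm n k hkn (w j)) = (ξ (w j))⁻¹ := aux9pm_xi n k hkn ξ hrel (w j) hwj
    have hyne := aux9pm_ne n k hkn hk (w j) hwj
    have hwi : w (w.symm (aux9pm n k hkn (w j))) = aux9pm n k hkn (w j) :=
      Equiv.apply_symm_apply w _
    have hij : w.symm (aux9pm n k hkn (w j)) ≠ j := by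
      intro h
      rw [h] at hwi
      exact hyne (congrArg Fin.val hwi.symm)
    have hzero : ∏ p ∈ univ.filter (fun p : Fin n × Fin n =>
        p.1 < p.2 ∧ 2*k ≤ ((p.2 : Fin n) : ℕ)),
        (1 - ξ (w p.1) * ξ (w p.2)) = 0 := by
      rcases lt_or_gt_of_ne hij with hlt | hgt
      · refine Finset.prod_eq_zero (i := (w.symm (aux9pm n k hkn (w j)), j))
          (Finset.mem_filter.2 ⟨Finset.mem_univ _, hlt, hj⟩) ?_
        show 1 - ξ (w (w.symm (aux9pm n k hkn (w j)))) * ξ (w j) = 0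
        rw [hwi, hyxi, inv_mul_cancel₀ (h0 (w j)), sub_self]
      · refine Finset.prod_eq_zero (i := (j, w.symm (aux9pm n k hkn (w j))))
          (Finset.mem_filter.2 ⟨Finset.mem_univ _, hgt, ?_⟩) ?_
        · show 2*k ≤ ((w.symm (aux9pm n k hkn (w j)) : Fin n) : ℕ)
          have : (j : ℕ) < ((w.symm (aux9pm n k hkn (w j)) : Fin n) : ℕ) := hgt
          omega
        · show 1 - ξ (w j) * ξ (w (w.symm (aux9pm n k hkn (w j)))) = 0
          rw [hwi, hyxi, mul_inv_cancel₀ (h0 (w j)), sub_self]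
    rw [hB]
    dsimp only
    rw [hzero, mul_zero, zero_mul]
  -- assembling
  have e1 : ∑ w : Equiv.Perm (Fin n), B w
      = ∑ w ∈ univ.filter (fun w : Equiv.Perm (Fin n) =>
          ∀ i : Fin n, (i : ℕ) < 2*k ↔ ((w i : Fin n) : ℕ) < 2*k), B w :=
    (Finset.sum_filter_of_ne (fun w _ hne => by
      by_contra hc
      exact hne (hvan w hc))).symm
  have e2 : ∑ w ∈ univ.filter (fun w : Equiv.Perm (Fin n) =>
        ∀ i : Fin n, (i : ℕ) < 2*k ↔ ((w i : Fin n) : ℕ) < 2*k), B w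
      = ∑ uv : Equiv.Perm (Fin (2*k)) × Equiv.Perm (Fin (n - 2*k)),
          B (aux9FF n k hkn uv.1 uv.2) := by
    refine Finset.sum_bij'
      (fun w hw => aux9GG n k hkn w ((Finset.mem_filter.mp hw).2))
      (fun uv _ => aux9FF n k hkn uv.1 uv.2)
      (fun w hw => Finset.mem_univ _)
      (fun uv _ => Finset.mem_filter.2 ⟨Finset.mem_univ _, aux9FF_C n k hkn uv.1 uv.2⟩)
      (fun w hw => aux9FF_GG n k hkn w _)
      (fun uv _ => ?_)
      (fun w hw => (congrArg B (aux9FF_GG n k hkn w _)).symm)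
    exact (aux9GG_FF n k hkn uv.1 uv.2 _).trans rfl
  have e3 : ∑ uv : Equiv.Perm (Fin (2*k)) × Equiv.Perm (Fin (n - 2*k)),
        B (aux9FF n k hkn uv.1 uv.2)
      = ∑ uv : Equiv.Perm (Fin (2*k)) × Equiv.Perm (Fin (n - 2*k)),
          Att * (D1 uv.1)⁻¹ * (D2 uv.2)⁻¹ :=
    Finset.sum_congr rfl fun uv _ => hterm uv.1 uv.2
  have e4 : ∑ uv : Equiv.Perm (Fin (2*k)) × Equiv.Perm (Fin (n - 2*k)),
        Att * (D1 uv.1)⁻¹ * (D2 uv.2)⁻¹ = Att := by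
    rw [Fintype.sum_prod_type]
    have hs2 : ∑ v : Equiv.Perm (Fin (n - 2*k)), (D2 v)⁻¹ = 1 := by
      rw [hD2]
      exact sum_perm_inv_prod y2 hy2ne hy2inj
    have hs1 : ∑ u : Equiv.Perm (Fin (2*k)), (D1 u)⁻¹ = 1 := by
      rw [hD1]
      exact sum_perm_inv_prod y1 hy1ne hy1inj
    have hinner : ∀ u : Equiv.Perm (Fin (2*k)),
        ∑ v : Equiv.Perm (Fin (n - 2*k)), Att * (D1 u)⁻¹ * (D2 v)⁻¹
          = Att * (D1 u)⁻¹ := by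
      intro u
      rw [← Finset.mul_sum, hs2, mul_one]
    rw [Finset.sum_congr rfl fun u _ => hinner u, ← Finset.mul_sum, hs1, mul_one]
  rw [e1, e2, e3, e4, hAtt]

end Chunk5

open Finset

/-- Let `1 ≤ k`, `2k ≤ n`, `a ∈ ℤ` and
`F := (x₁⋯x_{2k})^a ∏_{i<j, j>2k}(1-xᵢxⱼ) / ∏_{i<j}(1-xᵢ⁻¹xⱼ)`.
For every `w ∈ Sₙ`, the image under `φ_k` of the denominator of `w(F)` is
nonzero, so `φ_k` extends to each `w(F)`; and
`∑_{w ∈ Sₙ} φ_k(w(F)) = ∏_{2k < i < j ≤ n} (1 - xᵢxⱼ)`, an identity in the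
field of fractions of `ℤ[x₁^{±1},…,x_k^{±1}, x_{2k+1}^{±1},…,xₙ^{±1}]`. -/
theorem phi_sum_eq (n k : ℕ) (hk : 1 ≤ k) (hkn : 2 * k ≤ n) (a : ℤ) :
    (∀ w : Equiv.Perm (Fin n), phi n k hkn (permHom w (denF n)) ≠ 0) ∧
    ∑ w : Equiv.Perm (Fin n),
        algebraMap (T n k) (FractionRing (T n k)) (phi n k hkn (permHom w (numF n k a))) *
          (algebraMap (T n k) (FractionRing (T n k)) (phi n k hkn (permHom w (denF n))))⁻¹ =
      algebraMap (T n k) (FractionRing (T n k))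
        (∏ p ∈ Finset.univ.filter
            (fun p : Fin (n - 2 * k) × Fin (n - 2 * k) => p.1 < p.2),
          (1 - Y p.1 * Y p.2)) := by
  classical
  constructor
  · intro w h
    refine aux9_denF_ne n k hkn w ?_
    rw [aux9Phi, RingHom.comp_apply, h, map_zero]
  · have hAblock : ∀ w : Equiv.Perm (Fin n),
        (∀ i : Fin n, (i : ℕ) < 2*k ↔ ((w i : Fin n) : ℕ) < 2*k) →
        aux9Phi n k hkn (permHom w (AddMonoidAlgebra.single
          (fun i : Fin n => if (i : ℕ) < 2*k then a else 0) (1:ℤ))) = 1 := by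
      intro w hw
      rw [permHom_single, aux9Phi, RingHom.comp_apply, phi_single]
      have h1 : phiExp n k hkn ((fun i : Fin n => if (i : ℕ) < 2*k then a else 0) ∘ ⇑w.symm)
          = 0 := by
        refine E_blockconst n k hkn a _ fun i => ?_
        show (if ((w.symm i : Fin n) : ℕ) < 2*k then a else 0) = _
        have hiff : ((w.symm i : Fin n) : ℕ) < 2*k ↔ (i : ℕ) < 2*k := by
          have := hw (w.symm i)
          rwa [Equiv.apply_symm_apply] at this
        by_cases hcase : (i : ℕ) < 2*k
        · rw [if_pos (hiff.2 hcase), if_pos hcase]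
        · rw [if_neg (fun hh => hcase (hiff.1 hh)), if_neg hcase]
      rw [h1, ← AddMonoidAlgebra.one_def, map_one]
    have hmain := aux9_main_sum n k hk hkn (aux9xi n k hkn) (aux9_xi_ne_zero n k hkn)
      (fun i j h => aux9_xi_inj n k hkn h)
      (fun p hp => aux9_xi_partner n k hkn p hp)
      (fun w => aux9Phi n k hkn (permHom w (AddMonoidAlgebra.single
        (fun i : Fin n => if (i : ℕ) < 2*k then a else 0) (1:ℤ))))
      hAblock
    have hsummand : ∀ w : Equiv.Perm (Fin n),
        algebraMap (T n k) (FractionRing (T n k)) (phi n k hkn (permHom w (numF n k a))) *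
          (algebraMap (T n k) (FractionRing (T n k)) (phi n k hkn (permHom w (denF n))))⁻¹
        = (aux9Phi n k hkn (permHom w (AddMonoidAlgebra.single
              (fun i : Fin n => if (i : ℕ) < 2*k then a else 0) (1:ℤ)))
            * ∏ p ∈ univ.filter (fun p : Fin n × Fin n =>
                p.1 < p.2 ∧ 2*k ≤ ((p.2 : Fin n) : ℕ)),
              (1 - aux9xi n k hkn (w p.1) * aux9xi n k hkn (w p.2)))
          * (∏ p ∈ univ.filter (fun p : Fin n × Fin n => p.1 < p.2),
              (1 - (aux9xi n k hkn (w p.1))⁻¹ * aux9xi n k hkn (w p.2)))⁻¹ := by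
      intro w
      rw [show algebraMap (T n k) (FractionRing (T n k)) (phi n k hkn (permHom w (numF n k a)))
            = aux9Phi n k hkn (permHom w (numF n k a)) from rfl,
        show algebraMap (T n k) (FractionRing (T n k)) (phi n k hkn (permHom w (denF n)))
            = aux9Phi n k hkn (permHom w (denF n)) from rfl,
        aux9_Phi_numF n k hkn w a, aux9_Phi_denF n k hkn w]
    rw [Finset.sum_congr rfl fun w _ => hsummand w, hmain]
    have hY : ∀ j : Fin (n - 2*k),
        algebraMap (T n k) (FractionRing (T n k)) (Y j)
          = aux9xi n k hkn ⟨2*k + (j : ℕ), by have := j.isLt; omega⟩ := by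
      intro j
      rw [aux9_xi_eq, E_top n k hkn j]
      rfl
    rw [map_prod]
    refine Finset.prod_congr rfl fun q _ => ?_
    rw [map_sub, map_one, map_mul, hY q.1, hY q.2]

end
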